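/- arXiv:2409.13288 — 4 statements merged into one kernel-verified Lean document; each statement's English description precedes it below -/
import Mathlib

section
/- Let K be a field, let α₁,…,α_m ∈ ℤ^n be exponent vectors, and let c_{i,j} ∈ K for i ∈ [s], j ∈ [m]. In the Laurent polynomial ring K[x₁^±,…,x_n^±] define f_i := Σ_{j=1}^m c_{i,j} x^{α_j}, and in K[x₁^±,…,x_n^±, y₁^±,…,y_m^±] define f̂_i := Σ_{j=1}^m c_{i,j} y_j and ĝ_j := y_j − x^{α_j}. Then there is a K-algebra isomorphism K[x^±, y^±] / (⟨f̂₁,…,f̂_s⟩ + ⟨ĝ₁,…,ĝ_m⟩) ≅ K[x^±] / ⟨f₁,…,f_s⟩ sending the class of x_i to the class of x_i and the class of y_j to the class of x^{α_j}. -/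
open AddMonoidAlgebra

noncomputable section

/-- The Laurent polynomial ring in `n` variables over `R`: the group algebra of `ℤ^n`. -/
abbrev Laurent (R : Type*) [CommRing R] (n : ℕ) : Type _ :=
  AddMonoidAlgebra R (Fin n →₀ ℤ)

/-- The ring homomorphism between (Laurent) monoid algebras induced by a ring
homomorphism on the coefficients. -/
def coeffRingHom {R S : Type*} [CommRing R] [CommRing S] {G : Type*} [AddCommMonoid G]
    (f : R →+* S) : AddMonoidAlgebra R G →+* AddMonoidAlgebra S G :=
  AddMonoidAlgebra.liftNCRingHom (AddMonoidAlgebra.singleZeroRingHom.comp f)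
    (AddMonoidAlgebra.of S G) (fun _ _ => Commute.all _ _)

/-- The parametrized Laurent polynomial ring `K[a][x^±]`, with parameters indexed by `σ`. -/
abbrev Param (K : Type*) [Field K] (σ : Type*) (n : ℕ) : Type _ :=
  Laurent (MvPolynomial σ K) n

/-- The rational function field `K(a)`. -/
abbrev RatFF (K : Type*) [Field K] (σ : Type*) : Type _ :=
  FractionRing (MvPolynomial σ K)

/-- The generic specialization `I_{K(a)}` of a parametrized Laurent polynomial ideal:
the ideal generated by the image of `I` in `K(a)[x^±]`. -/
def genericSpec {K : Type*} [Field K] {σ : Type*} {n : ℕ} (I : Ideal (Param K σ n)) :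
    Ideal (Laurent (RatFF K σ) n) :=
  Ideal.map (coeffRingHom (algebraMap (MvPolynomial σ K) (RatFF K σ))) I

/-- The generic root count `ℓ_{I,K(a)} = dim_{K(a)} K(a)[x^±]/I_{K(a)}`, as a cardinal. -/
def genericRootCount {K : Type*} [Field K] {σ : Type*} {n : ℕ} (I : Ideal (Param K σ n)) :
    Cardinal :=
  Module.rank (RatFF K σ) (Laurent (RatFF K σ) n ⧸ genericSpec I)

/-- `I` is generically a complete intersection: `K(a)[x^±]/I_{K(a)}` is isomorphic, as a
`K(a)`-algebra, to a quotient `K(a)[z₁,…,z_r]/⟨f₁,…,f_k⟩` of Krull dimension `r - k`. -/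
def IsGenericCompleteIntersection {K : Type*} [Field K] {σ : Type*} {n : ℕ}
    (I : Ideal (Param K σ n)) : Prop :=
  ∃ (r k : ℕ) (f : Fin k → MvPolynomial (Fin r) (RatFF K σ)), k ≤ r ∧
    Nonempty ((Laurent (RatFF K σ) n ⧸ genericSpec I) ≃ₐ[RatFF K σ]
      (MvPolynomial (Fin r) (RatFF K σ) ⧸ Ideal.span (Set.range f))) ∧
    ringKrullDim (MvPolynomial (Fin r) (RatFF K σ) ⧸ Ideal.span (Set.range f)) = ((r - k : ℕ) : WithBot ℕ∞)

/-- The specialization `I_P` of a parametrized Laurent polynomial ideal at `P ∈ K^m`. -/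
def specialization {K : Type*} [Field K] {m n : ℕ} (I : Ideal (Param K (Fin m) n))
    (P : Fin m → K) : Ideal (Laurent K n) :=
  Ideal.map (coeffRingHom (MvPolynomial.eval P)) I

end

/-!
Substituting `y_j := x^{α_j}` is a retraction of `K[x^±, y^±]` onto `K[x^±]`; it kills every
`ĝ_j` and sends `f̂_i` to `f_i`. Conversely `f_i = f̂_i - Σ_j c_{i,j} ĝ_j` in the larger ring, and
modulo the `ĝ_j` every `y_j` is congruent to `x^{α_j}`, so the substitution followed by the
inclusion is the identity modulo `⟨f̂⟩ + ⟨ĝ⟩`. The two maps therefore induce mutually inverse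
isomorphisms of the quotients.
-/

theorem AddMonoidAlgebra.algHom_ext_finsupp_int {k N B : Type*} [CommSemiring k] [Semiring B]
    [Algebra k B] ⦃φ₁ φ₂ : AddMonoidAlgebra k (N →₀ ℤ) →ₐ[k] B⦄
    (h : ∀ x, φ₁ (single (Finsupp.single x 1) 1) = φ₂ (single (Finsupp.single x 1) 1)) :
    φ₁ = φ₂ := by
  refine algHom_ext (fun e => ?_) (Subsingleton.elim _ _)
  let ψ (φ : AddMonoidAlgebra k (N →₀ ℤ) →ₐ[k] B) : (N →₀ ℤ) →+ Additive B :=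
    MonoidHom.toAdditiveRight ((φ : AddMonoidAlgebra k (N →₀ ℤ) →* B).comp (of k _))
  have : ψ φ₁ = ψ φ₂ := Finsupp.addHom_ext' fun x => AddMonoidHom.ext_int (h x)
  exact congr(Additive.toMul ($this e))

namespace Ideal

variable {R A B : Type*} [CommSemiring R] [CommRing A] [CommRing B] [Algebra R A] [Algebra R B]
  {I : Ideal A} {J : Ideal B}

theorem quotientMapₐ_comp_quotientMapₐ (f : A →ₐ[R] B) (g : B →ₐ[R] A)
    (hf : I ≤ J.comap f) (hg : J ≤ I.comap g)
    (hfg : (Quotient.mkₐ R J).comp (f.comp g) = Quotient.mkₐ R J) :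
    (quotientMapₐ J f hf).comp (quotientMapₐ I g hg) = AlgHom.id R (B ⧸ J) := by
  refine Quotient.algHom_ext R ?_
  rw [AlgHom.comp_assoc, quotient_map_comp_mkₐ, ← AlgHom.comp_assoc, quotient_map_comp_mkₐ,
    AlgHom.comp_assoc, hfg, AlgHom.id_comp]

def quotientEquivAlgOfInverseMod (f : A →ₐ[R] B) (g : B →ₐ[R] A)
    (hf : I ≤ J.comap f) (hg : J ≤ I.comap g)
    (hgf : (Quotient.mkₐ R I).comp (g.comp f) = Quotient.mkₐ R I)
    (hfg : (Quotient.mkₐ R J).comp (f.comp g) = Quotient.mkₐ R J) :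
    (A ⧸ I) ≃ₐ[R] (B ⧸ J) :=
  AlgEquiv.ofAlgHom (quotientMapₐ J f hf) (quotientMapₐ I g hg)
    (quotientMapₐ_comp_quotientMapₐ f g hf hg hfg) (quotientMapₐ_comp_quotientMapₐ g f hg hf hgf)

end Ideal

noncomputable section

variable {R : Type*} [CommRing R] {n m s : ℕ} (α : Fin m → (Fin n →₀ ℤ))
  (c : Fin s → Fin m → R)

/-- The exponent map `(a, b) ↦ a + Σ_j b_j α_j` of `ℤ^{n+m} → ℤ^n`, the first `n` coordinates
being the `x`-exponents and the last `m` the `y`-exponents; on Laurent rings it substitutes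
`y_j := x^{α_j}`. -/
def substExponent : (Fin (n + m) →₀ ℤ) →+ (Fin n →₀ ℤ) :=
  (Finsupp.linearCombination ℤ (Fin.addCases (fun i => Finsupp.single i 1) α)).toAddMonoidHom

@[simp]
theorem substExponent_castAdd (i : Fin n) :
    substExponent α (Finsupp.single (Fin.castAdd m i) 1) = Finsupp.single i 1 := by
  simp [substExponent]

@[simp]
theorem substExponent_natAdd (j : Fin m) :
    substExponent α (Finsupp.single (Fin.natAdd n j) 1) = α j := by
  simp [substExponent]

theorem substExponent_comp_mapDomain_castAdd :
    (substExponent α).comp (Finsupp.mapDomain.addMonoidHom (Fin.castAdd m)) = .id _ :=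
  Finsupp.addHom_ext' fun i => AddMonoidHom.ext_int (by simp)

@[simp]
theorem substExponent_mapDomain_castAdd (e : Fin n →₀ ℤ) :
    substExponent α (Finsupp.mapDomain (Fin.castAdd m) e) = e :=
  DFunLike.congr_fun (substExponent_comp_mapDomain_castAdd α) e

variable (R) in
def laurentSubst : Laurent R (n + m) →ₐ[R] Laurent R n :=
  mapDomainAlgHom R R (substExponent α)

variable (R m) in
def laurentInclX : Laurent R n →ₐ[R] Laurent R (n + m) :=
  mapDomainAlgHom R R (Finsupp.mapDomain.addMonoidHom (Fin.castAdd m))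

@[simp]
theorem laurentSubst_single (e : Fin (n + m) →₀ ℤ) (r : R) :
    laurentSubst R α (single e r) = single (substExponent α e) r := by
  simp [laurentSubst]

@[simp]
theorem laurentInclX_single (e : Fin n →₀ ℤ) (r : R) :
    laurentInclX R m (single e r) = single (Finsupp.mapDomain (Fin.castAdd m) e) r := by
  simp [laurentInclX]

theorem laurentSubst_comp_laurentInclX :
    (laurentSubst R α).comp (laurentInclX R m) = AlgHom.id R (Laurent R n) := by
  rw [laurentSubst, laurentInclX, ← mapDomainAlgHom_comp, substExponent_comp_mapDomain_castAdd,
    mapDomainAlgHom_id]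

def monomialSystem (i : Fin s) : Laurent R n := ∑ j, single (α j) (c i j)

def linearSystem (i : Fin s) : Laurent R (n + m) :=
  ∑ j, single (Finsupp.single (Fin.natAdd n j) 1) (c i j)

variable (R) in
def binomialSystem (j : Fin m) : Laurent R (n + m) :=
  single (Finsupp.single (Fin.natAdd n j) 1) 1 - single (Finsupp.mapDomain (Fin.castAdd m) (α j)) 1

def modificationIdeal : Ideal (Laurent R (n + m)) :=
  Ideal.span (Set.range (linearSystem (n := n) c)) + Ideal.span (Set.range (binomialSystem R α))

theorem linearSystem_mem_modificationIdeal (i : Fin s) :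
    linearSystem c i ∈ modificationIdeal α c :=
  Ideal.mem_sup_left (Ideal.subset_span (Set.mem_range_self i))

theorem binomialSystem_mem_modificationIdeal (j : Fin m) :
    binomialSystem R α j ∈ modificationIdeal α c :=
  Ideal.mem_sup_right (Ideal.subset_span (Set.mem_range_self j))

theorem laurentSubst_linearSystem (i : Fin s) :
    laurentSubst R α (linearSystem c i) = monomialSystem α c i := by
  simp [linearSystem, monomialSystem]

theorem laurentSubst_binomialSystem (j : Fin m) :
    laurentSubst R α (binomialSystem R α j) = 0 := by
  simp [binomialSystem]

theorem laurentInclX_monomialSystem (i : Fin s) :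
    laurentInclX R m (monomialSystem α c i)
      = linearSystem c i - ∑ j, c i j • binomialSystem R α j := by
  simp [monomialSystem, linearSystem, binomialSystem, ← Finset.sum_sub_distrib, smul_sub,
    smul_single]

theorem modificationIdeal_le_comap_laurentSubst :
    modificationIdeal α c
      ≤ (Ideal.span (Set.range (monomialSystem α c))).comap (laurentSubst R α) := by
  refine sup_le (Ideal.span_le.2 ?_) (Ideal.span_le.2 ?_) <;> rintro _ ⟨i, rfl⟩
  · simpa [laurentSubst_linearSystem] using Ideal.subset_span (Set.mem_range_self i)
  · simp [laurentSubst_binomialSystem]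

theorem span_monomialSystem_le_comap_laurentInclX :
    Ideal.span (Set.range (monomialSystem α c))
      ≤ (modificationIdeal α c).comap (laurentInclX R m) := by
  refine Ideal.span_le.2 ?_
  rintro _ ⟨i, rfl⟩
  rw [SetLike.mem_coe, Ideal.mem_comap, laurentInclX_monomialSystem]
  exact sub_mem (linearSystem_mem_modificationIdeal α c i) (Ideal.sum_mem _ fun j _ =>
    Submodule.smul_of_tower_mem _ _ (binomialSystem_mem_modificationIdeal α c j))

theorem mkₐ_comp_laurentInclX_comp_laurentSubst :
    (Ideal.Quotient.mkₐ R (modificationIdeal α c)).comp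
        ((laurentInclX R m).comp (laurentSubst R α))
      = Ideal.Quotient.mkₐ R (modificationIdeal α c) := by
  refine AddMonoidAlgebra.algHom_ext_finsupp_int fun k => ?_
  induction k using Fin.addCases with
  | left i => simp
  | right j =>
    simp only [AlgHom.comp_apply, laurentSubst_single, laurentInclX_single, substExponent_natAdd,
      Ideal.Quotient.mkₐ_eq_mk, Ideal.Quotient.eq]
    rw [← neg_mem_iff, neg_sub]
    exact binomialSystem_mem_modificationIdeal α c j

end

/-- The algebraic core of the vertical modification: with
`f_i = Σ_j c_{i,j} x^{α_j}`, `f̂_i = Σ_j c_{i,j} y_j` and `ĝ_j = y_j − x^{α_j}`, the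
quotients `K[x^±,y^±]/(⟨f̂⟩ + ⟨ĝ⟩)` and `K[x^±]/⟨f⟩` are isomorphic as `K`-algebras,
via `x_i ↦ x_i`, `y_j ↦ x^{α_j}`. -/
theorem statement3 {K : Type*} [Field K] {n m s : ℕ}
    (α : Fin m → (Fin n →₀ ℤ)) (c : Fin s → Fin m → K) :
    let f : Fin s → Laurent K n := fun i => ∑ j, single (α j) (c i j)
    let fhat : Fin s → Laurent K (n + m) :=
      fun i => ∑ j, single (Finsupp.single (Fin.natAdd n j) 1) (c i j)
    let ghat : Fin m → Laurent K (n + m) := fun j =>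
      single (Finsupp.single (Fin.natAdd n j) 1) 1
        - single (Finsupp.mapDomain (Fin.castAdd m) (α j)) 1
    let Ihat : Ideal (Laurent K (n + m)) :=
      Ideal.span (Set.range fhat) + Ideal.span (Set.range ghat)
    let I : Ideal (Laurent K n) := Ideal.span (Set.range f)
    ∃ e : (Laurent K (n + m) ⧸ Ihat) ≃ₐ[K] (Laurent K n ⧸ I),
      (∀ i : Fin n,
        e (Ideal.Quotient.mk Ihat (single (Finsupp.single (Fin.castAdd m i) 1) 1))
          = Ideal.Quotient.mk I (single (Finsupp.single i 1) 1)) ∧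
      (∀ j : Fin m,
        e (Ideal.Quotient.mk Ihat (single (Finsupp.single (Fin.natAdd n j) 1) 1))
          = Ideal.Quotient.mk I (single (α j) 1)) := by
  intro f fhat ghat Ihat I
  let e := Ideal.quotientEquivAlgOfInverseMod (laurentSubst K α) (laurentInclX K m)
    (modificationIdeal_le_comap_laurentSubst α c) (span_monomialSystem_le_comap_laurentInclX α c)
    (mkₐ_comp_laurentInclX_comp_laurentSubst α c)
    (by rw [laurentSubst_comp_laurentInclX, AlgHom.comp_id])
  refine ⟨e, fun i => ?_, fun j => ?_⟩
  · change Ideal.Quotient.mk I (laurentSubst K α _) = _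
    simp
  · change Ideal.Quotient.mk I (laurentSubst K α _) = _
    simp
end

section
/- Let K be an algebraically closed field of characteristic 0 and let I be an ideal of the Laurent polynomial ring K[x₁^±,…,x_n^±] that is generated by a set of binomials, i.e., by Laurent polynomials each of which has at most two nonzero terms (its support, as a finitely supported function ℤ^n → K, has at most two elements). Then I is a radical ideal. -/
open AddMonoidAlgebra

/-!
A proper binomial ideal `I` of `K[G]` is a lattice ideal. The exponents `γ` with `x^γ - c ∈ I` for
some `c ≠ 0` form a subgroup `L`; the constant `c = ρ γ` is unique and multiplicative in `γ`; and
every binomial generator is a monomial multiple of some `x^γ - ρ γ`. As `Kˣ` is divisible, `ρ`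
extends to a character `χ` of `G`, and the lattice ideal is the kernel of
`K[G] → K[G ⧸ L]`, `x^g ↦ χ g • x^[g]`. The target is reduced: characters `G → Kˣ` separate points
(divisibility of `Kˣ` and roots of unity of every order), so by Dedekind's independence of
characters an element killed by every character evaluation is zero.
-/

section Characters

variable {K : Type*} [Field K] [IsAlgClosed K]

theorem IsAlgClosed.baer_additive_units : Module.Baer ℤ (Additive Kˣ) :=
  letI : DivisibleBy (Additive Kˣ) ℕ := divisibleByOfSMulRightSurj _ _ fun {n} hn u => by
    obtain ⟨z, hz⟩ := IsAlgClosed.exists_pow_nat_eq (u.toMul : K) (Nat.pos_of_ne_zero hn)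
    refine ⟨Additive.ofMul (Units.mk0 z ?_), ?_⟩
    · rintro rfl
      exact u.toMul.ne_zero (by rw [← hz, zero_pow hn])
    · exact Additive.toMul.injective (Units.ext (by simpa using hz))
  letI := AddGroup.divisibleByIntOfDivisibleByNat (Additive Kˣ)
  Module.Baer.of_divisible _

theorem AddChar.exists_compAddMonoidHom_eq {A B : Type*} [AddCommGroup A] [AddCommGroup B]
    (f : A →+ B) (hf : Function.Injective f) (χ : AddChar A Kˣ) :
    ∃ ψ : AddChar B Kˣ, ψ.compAddMonoidHom f = χ := by
  obtain ⟨ψ, hψ⟩ := IsAlgClosed.baer_additive_units.extension_property_addMonoidHom f hf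
    χ.toAddMonoidHom
  refine ⟨AddChar.toAddMonoidHomEquiv.symm ψ, AddChar.ext _ _ fun a => ?_⟩
  exact congrArg Additive.toMul (DFunLike.congr_fun hψ a)

variable [CharZero K]

theorem Units.exists_ne_one_orderOf_dvd {m : ℕ} (hm : m ≠ 1) :
    ∃ u : Kˣ, u ≠ 1 ∧ orderOf u ∣ m := by
  rcases Nat.eq_zero_or_pos m with rfl | hm0
  · exact ⟨-1, by norm_num [Units.ext_iff], dvd_zero _⟩
  have : NeZero m := ⟨hm0.ne'⟩
  obtain ⟨ζ, hζ⟩ := HasEnoughRootsOfUnity.exists_primitiveRoot K m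
  refine ⟨(hζ.isUnit hm0.ne').unit, fun h => hζ.ne_one (by omega) ?_, ?_⟩
  · simpa using congrArg Units.val h
  · rw [← (IsPrimitiveRoot.coe_units_iff.mp (by rwa [IsUnit.unit_spec])).eq_orderOf]

theorem AddChar.exists_apply_ne_one {G : Type*} [AddCommGroup G] {c : G} (hc : c ≠ 0) :
    ∃ ψ : AddChar G Kˣ, ψ c ≠ 1 := by
  obtain ⟨u, hu1, hu⟩ := Units.exists_ne_one_orderOf_dvd (K := K)
    (mt AddMonoid.addOrderOf_eq_one_iff.mp hc)
  -- the character of `ℤ ⧸ ker f ≃ zmultiples c` sending `c` to `u`, extended to `G`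
  let f := zmultiplesHom G c
  have hker : f.ker ≤ (zmultiplesHom _ (Additive.ofMul u)).ker := fun k hk => by
    have hk : (addOrderOf c : ℤ) ∣ k := addOrderOf_dvd_iff_zsmul_eq_zero.mpr hk
    exact congrArg Additive.ofMul (orderOf_dvd_iff_zpow_eq_one.mp
      ((Int.natCast_dvd_natCast.mpr hu).trans hk))
  obtain ⟨ψ, hψ⟩ := AddChar.exists_compAddMonoidHom_eq _ (QuotientAddGroup.kerLift_injective f)
    (AddChar.toAddMonoidHomEquiv.symm (QuotientAddGroup.lift _ _ hker))
  have hψc : ψ c = u := by simpa [f] using DFunLike.congr_fun hψ (QuotientAddGroup.mk (1 : ℤ))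
  exact ⟨ψ, hψc ▸ hu1⟩

end Characters

namespace AddMonoidAlgebra

section Reduced

variable {K : Type*} [Field K] {G : Type*} [AddCommGroup G]

noncomputable def evalAddChar (ψ : AddChar G Kˣ) : K[G] →ₐ[K] K :=
  lift K K G ((Units.coeHom K).compAddChar ψ).toMonoidHom

theorem evalAddChar_apply (ψ : AddChar G Kˣ) (p : K[G]) :
    evalAddChar ψ p = p.coeff.sum fun g r => r * ψ g := by
  simp [evalAddChar, lift_apply]

variable [IsAlgClosed K] [CharZero K]

theorem eq_zero_of_forall_evalAddChar_eq_zero {p : K[G]}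
    (hp : ∀ ψ : AddChar G Kˣ, evalAddChar ψ p = 0) : p = 0 := by
  let e : G → AddChar G Kˣ →* K := fun g =>
    { toFun := fun ψ => ψ g, map_one' := rfl, map_mul' := fun _ _ => rfl }
  have he : Function.Injective e := fun g h hgh => by
    by_contra hne
    obtain ⟨ψ, hψ⟩ := AddChar.exists_apply_ne_one (K := K) (sub_ne_zero.mpr hne)
    refine hψ ?_
    have : (ψ g : K) = ψ h := DFunLike.congr_fun hgh ψ
    rw [AddChar.map_sub_eq_div, div_eq_one, Units.ext this]
  have hli := (linearIndependent_monoidHom (AddChar G Kˣ) K).comp e he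
  rw [← coeff_inj, coeff_zero]
  refine linearIndependent_iff.mp hli p.coeff (funext fun ψ => ?_)
  rw [Pi.zero_apply, ← hp ψ, evalAddChar_apply, Finsupp.linearCombination_apply, Finsupp.sum_apply']
  rfl

instance isReduced_of_isAlgClosed : IsReduced K[G] where
  eq_zero p := fun ⟨N, hN⟩ => eq_zero_of_forall_evalAddChar_eq_zero fun ψ =>
    pow_eq_zero_iff (n := N) (by rintro rfl; simp at hN) |>.mp (by rw [← map_pow, hN, map_zero])

end Reduced

section Lattice

variable {R : Type*} [CommRing R] {G : Type*} [AddCommGroup G]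

theorem single_mul_sub_single_zero (s γ : G) (r c : R) :
    single s r * (single γ 1 - single 0 c) = single (s + γ) r - single s (r * c) := by
  rw [mul_sub, single_mul_single, single_mul_single, mul_one, add_zero]

theorem isUnit_single {r : R} (hr : IsUnit r) (g : G) : IsUnit (single g r) := by
  obtain ⟨u, rfl⟩ := hr
  refine ⟨⟨single g u, single (-g) ↑u⁻¹, ?_, ?_⟩, rfl⟩ <;> simp [single_mul_single, one_def]

theorem binomial_add_mem {I : Ideal R[G]} {γ δ : G} {c d : R}
    (hc : single γ 1 - single 0 c ∈ I) (hd : single δ 1 - single 0 d ∈ I) :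
    single (γ + δ) 1 - single 0 (c * d) ∈ I := by
  have key : single δ 1 * (single γ 1 - single 0 c) + single 0 c * (single δ 1 - single 0 d) =
      single (γ + δ) 1 - single 0 (c * d) := by
    rw [single_mul_sub_single_zero, single_mul_sub_single_zero, add_comm δ, zero_add, one_mul,
      sub_add_sub_cancel]
  exact key ▸ add_mem (I.mul_mem_left _ hc) (I.mul_mem_left _ hd)

theorem binomial_neg_mem {I : Ideal R[G]} {γ : G} {u : Rˣ}
    (hu : single γ 1 - single 0 (u : R) ∈ I) : single (-γ) 1 - single 0 (↑u⁻¹ : R) ∈ I := by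
  have key : -single (-γ) (↑u⁻¹ : R) * (single γ 1 - single 0 (u : R)) =
      single (-γ) 1 - single 0 (↑u⁻¹ : R) := by
    rw [neg_mul, single_mul_sub_single_zero, neg_add_cancel, Units.inv_mul, neg_sub]
  exact key ▸ I.mul_mem_left _ hu

def binomialExponents (I : Ideal R[G]) : AddSubgroup G where
  carrier := {γ | ∃ c : Rˣ, single γ 1 - single 0 (c : R) ∈ I}
  zero_mem' := ⟨1, by simp⟩
  add_mem' := fun ⟨c, hc⟩ ⟨d, hd⟩ => ⟨c * d, by simpa using binomial_add_mem hc hd⟩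
  neg_mem' := fun ⟨c, hc⟩ => ⟨c⁻¹, by simpa using binomial_neg_mem hc⟩

/-- Only the restriction of `χ` to `L` matters: it is the partial character `ρ` of the lattice
ideal `I_{L,ρ} = ⟨x^γ - ρ γ | γ ∈ L⟩`. -/
noncomputable def latticeIdeal (L : AddSubgroup G) (χ : AddChar G Rˣ) : Ideal R[G] :=
  Ideal.span ((fun γ => single γ 1 - single 0 (χ γ : R)) '' L)

noncomputable def latticeHom (L : AddSubgroup G) (χ : AddChar G Rˣ) : R[G] →ₐ[R] R[G ⧸ L] :=
  lift R _ G
    { toFun := fun g => single (g.toAdd : G ⧸ L) (χ g.toAdd : R)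
      map_one' := by simp [one_def]
      map_mul' := fun g h => by simp [single_mul_single, AddChar.map_add_eq_mul] }

theorem latticeHom_single (L : AddSubgroup G) (χ : AddChar G Rˣ) (g : G) (r : R) :
    latticeHom L χ (single g r) = single (g : G ⧸ L) (r * χ g) := by
  simp [latticeHom, lift_single, smul_single]

theorem ker_latticeHom (L : AddSubgroup G) (χ : AddChar G Rˣ) :
    RingHom.ker (latticeHom L χ) = latticeIdeal L χ := by
  refine le_antisymm (fun p hp => ?_) (Ideal.span_le.mpr ?_)
  · -- an additive section of `latticeHom L χ` whose defect lies in the lattice ideal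
    let σ : R[G ⧸ L] →+ R[G] :=
      (Finsupp.liftAddHom fun q => (singleAddHom q.out).comp
        (AddMonoidHom.mulRight (↑(χ q.out)⁻¹ : R))).comp coeffAddEquiv.toAddMonoidHom
    have hσ : ∀ q r, σ (single q r) = single q.out (r * ↑(χ q.out)⁻¹) := fun q r =>
      Finsupp.liftAddHom_apply_single _ q r
    have key : ∀ p, p - σ (latticeHom L χ p) ∈ latticeIdeal L χ := by
      intro p
      induction p using AddMonoidAlgebra.induction_linear with
      | zero => simp
      | add p q hp hq => rw [map_add, map_add, add_sub_add_comm]; exact add_mem hp hq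
      | single g r =>
        set s := (g : G ⧸ L).out with hs
        have hγ : g - s ∈ L := by
          rw [← QuotientAddGroup.eq_zero_iff, QuotientAddGroup.mk_sub, hs,
            QuotientAddGroup.out_eq', sub_self]
        have : single g r - σ (latticeHom L χ (single g r)) =
            single s r * (single (g - s) 1 - single 0 (χ (g - s) : R)) := by
          rw [single_mul_sub_single_zero, add_sub_cancel, latticeHom_single, hσ, ← hs,
            AddChar.map_sub_eq_div, div_eq_mul_inv, Units.val_mul, mul_assoc]
        rw [this]
        exact Ideal.mul_mem_left _ _ (Ideal.subset_span ⟨_, hγ, rfl⟩)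
    simpa [RingHom.mem_ker.mp hp] using key p
  · rintro _ ⟨γ, hγ, rfl⟩
    simp [latticeHom_single, (QuotientAddGroup.eq_zero_iff γ).mpr hγ]

theorem isRadical_latticeIdeal {K : Type*} [Field K] [IsAlgClosed K] [CharZero K]
    (L : AddSubgroup G) (χ : AddChar G Kˣ) : (latticeIdeal L χ).IsRadical := by
  rw [← ker_latticeHom, RingHom.ker_eq_comap_bot]
  exact Ideal.isRadical_bot.comap _

end Lattice

theorem exists_eq_single_add_single {R M : Type*} [Semiring R] [Nonempty M] {f : R[M]}
    (hf : f.coeff.support.card ≤ 2) : ∃ α β a b, f = single α a + single β b := by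
  classical
  rcases f.coeff.support.eq_empty_or_nonempty with h0 | ⟨α, hα⟩
  · obtain ⟨β, b, hb⟩ :=
      Finsupp.card_support_le_one'.mp (show f.coeff.support.card ≤ 1 by simp [h0])
    exact ⟨β, β, 0, b, by rw [single_zero, zero_add, ← coeff_inj, hb, coeff_single]⟩
  · obtain ⟨β, b, hb⟩ := Finsupp.card_support_le_one'.mp (show (f.erase α).coeff.support.card ≤ 1
      by rw [coeff_erase, Finsupp.support_erase, Finset.card_erase_of_mem hα]; omega)
    refine ⟨α, β, f.coeff α, b, ?_⟩
    rw [← coeff_inj.mp (hb.trans (coeff_single β b).symm), single_add_erase]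

section Binomial

variable {K : Type*} [Field K] {G : Type*} [AddCommGroup G]

theorem eq_of_binomial_mem {I : Ideal K[G]} (hI : I ≠ ⊤) {γ : G} {c d : K}
    (hc : single γ 1 - single 0 c ∈ I) (hd : single γ 1 - single 0 d ∈ I) : c = d := by
  by_contra hne
  have : single 0 (d - c) ∈ I := by simpa [single_sub] using I.sub_mem hc hd
  exact hI (I.eq_top_of_isUnit_mem this (isUnit_single (sub_ne_zero.mpr (Ne.symm hne)).isUnit 0))

theorem exists_addChar_binomial_mem [IsAlgClosed K] {I : Ideal K[G]} (hI : I ≠ ⊤) :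
    ∃ χ : AddChar G Kˣ, ∀ γ ∈ binomialExponents I, single γ 1 - single 0 (χ γ : K) ∈ I := by
  choose c hc using fun γ : binomialExponents I => γ.2
  let ρ : AddChar (binomialExponents I) Kˣ :=
    { toFun := c
      map_zero_eq_one' := Units.ext (eq_of_binomial_mem hI (hc 0) (by simp))
      map_add_eq_mul' := fun γ δ => Units.ext (eq_of_binomial_mem hI (hc (γ + δ))
        (by simpa using binomial_add_mem (hc γ) (hc δ))) }
  obtain ⟨χ, hχ⟩ := AddChar.exists_compAddMonoidHom_eq _ (binomialExponents I).subtype_injective ρ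
  refine ⟨χ, fun γ hγ => ?_⟩
  have : χ γ = c ⟨γ, hγ⟩ := DFunLike.congr_fun hχ ⟨γ, hγ⟩
  exact this ▸ hc ⟨γ, hγ⟩

theorem single_add_single_mem_latticeIdeal {I : Ideal K[G]} (hI : I ≠ ⊤) {χ : AddChar G Kˣ}
    (hχ : ∀ γ ∈ binomialExponents I, single γ 1 - single 0 (χ γ : K) ∈ I) {α β : G} {a b : K}
    (hf : single α a + single β b ∈ I) :
    single α a + single β b ∈ latticeIdeal (binomialExponents I) χ := by
  have hmonomial : ∀ g r, single g r ∈ I → r = 0 := fun g r h => by_contra fun hr =>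
    hI (I.eq_top_of_isUnit_mem h (isUnit_single (Ne.isUnit hr) g))
  rcases eq_or_ne a 0 with rfl | ha
  · rw [single_zero, zero_add] at hf ⊢
    rw [hmonomial _ _ hf, single_zero]
    exact zero_mem _
  have hg : single (α - β) 1 - single 0 (-(a⁻¹ * b)) ∈ I := by
    have key : single (-β) a⁻¹ * (single α a + single β b) =
        single (α - β) 1 - single 0 (-(a⁻¹ * b)) := by
      rw [mul_add, single_mul_single, single_mul_single, neg_add_eq_sub, neg_add_cancel,
        inv_mul_cancel₀ ha, single_neg, sub_neg_eq_add]
    exact key ▸ I.mul_mem_left _ hf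
  have hc : -(a⁻¹ * b) ≠ 0 := fun h => one_ne_zero (hmonomial _ _ (by simpa [h] using hg))
  have hmem : α - β ∈ binomialExponents I := ⟨Units.mk0 _ hc, hg⟩
  have hχαβ : (χ (α - β) : K) = -(a⁻¹ * b) := eq_of_binomial_mem hI (hχ _ hmem) hg
  have key : single β a * (single (α - β) 1 - single 0 (χ (α - β) : K)) =
      single α a + single β b := by
    rw [single_mul_sub_single_zero, add_sub_cancel, hχαβ, mul_neg, mul_inv_cancel_left₀ ha,
      single_neg, sub_neg_eq_add]
  exact key ▸ Ideal.mul_mem_left _ _ (Ideal.subset_span ⟨_, hmem, rfl⟩)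

theorem span_eq_latticeIdeal_of_card_support_le_two [IsAlgClosed K] {S : Set K[G]}
    (hS : ∀ f ∈ S, f.coeff.support.card ≤ 2) (hI : Ideal.span S ≠ ⊤) :
    ∃ χ : AddChar G Kˣ, Ideal.span S = latticeIdeal (binomialExponents (Ideal.span S)) χ := by
  obtain ⟨χ, hχ⟩ := exists_addChar_binomial_mem hI
  refine ⟨χ, le_antisymm (Ideal.span_le.mpr fun f hf => ?_) (Ideal.span_le.mpr ?_)⟩
  · obtain ⟨α, β, a, b, rfl⟩ := exists_eq_single_add_single (hS f hf)
    exact single_add_single_mem_latticeIdeal hI hχ (Ideal.subset_span hf)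
  · rintro _ ⟨γ, hγ, rfl⟩
    exact hχ γ hγ

theorem isRadical_span_of_card_support_le_two [IsAlgClosed K] [CharZero K] {S : Set K[G]}
    (hS : ∀ f ∈ S, f.coeff.support.card ≤ 2) : (Ideal.span S).IsRadical := by
  by_cases hI : Ideal.span S = ⊤
  · rw [hI]
    exact fun _ _ => Submodule.mem_top
  obtain ⟨χ, hχ⟩ := span_eq_latticeIdeal_of_card_support_le_two hS hI
  rw [hχ]
  exact isRadical_latticeIdeal _ χ

end Binomial

end AddMonoidAlgebra

/-- Over an algebraically closed field of characteristic zero, any ideal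
of the Laurent polynomial ring generated by binomials (Laurent polynomials supported on at
most two monomials) is radical. -/
theorem statement7 {K : Type*} [Field K] [IsAlgClosed K] [CharZero K] {n : ℕ}
    (I : Ideal (Laurent K n))
    (hbin : ∃ S : Set (Laurent K n), (∀ f ∈ S, f.coeff.support.card ≤ 2) ∧ I = Ideal.span S) :
    I.IsRadical := by
  obtain ⟨S, hS, rfl⟩ := hbin
  exact AddMonoidAlgebra.isRadical_span_of_card_support_le_two hS
end

section
/- Let K ⊆ L be a field extension and let I ⊆ K[a₁,…,a_m][x₁^±,…,x_n^±] be a parametrized Laurent polynomial ideal. Let Ĩ ⊆ L[a₁,…,a_m][x₁^±,…,x_n^±] be the parametrized ideal generated by the image of I under the natural inclusion. Then the generic root counts coincide: dim_{K(a)} K(a)[x^±]/I_{K(a)} = dim_{L(a)} L(a)[x^±]/Ĩ_{L(a)}, as an equality of cardinals (both sides may be infinite). -/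
open AddMonoidAlgebra

universe u v

/-!
The coefficient map `K(a) → L(a)` is a field extension, and since `K[a] → K(a) → L(a)` and
`K[a] → L[a] → L(a)` agree, `Ĩ_{L(a)}` is the extension of `I_{K(a)}` to `L(a)[x^±]`. Hence
`L(a)[x^±]/Ĩ_{L(a)} ≅ L(a) ⊗_{K(a)} (K(a)[x^±]/I_{K(a)})`, and base change of a vector space
along a field extension preserves its dimension.
-/

universe w

open scoped TensorProduct

theorem coeffRingHom_eq_mapRingHom {R S G : Type*} [CommRing R] [CommRing S] [AddCommMonoid G]
    (f : R →+* S) : coeffRingHom f = mapRingHom G f := by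
  ext <;> simp [coeffRingHom]

theorem map_map_coeffRingHom_of_comp_eq {R S₁ S₂ T G : Type*} [CommRing R] [CommRing S₁]
    [CommRing S₂] [CommRing T] [AddCommMonoid G] {f₁ : R →+* S₁} {g₁ : S₁ →+* T}
    {f₂ : R →+* S₂} {g₂ : S₂ →+* T} (h : g₁.comp f₁ = g₂.comp f₂)
    (J : Ideal (AddMonoidAlgebra R G)) :
    (J.map (coeffRingHom f₁)).map (coeffRingHom g₁) =
      (J.map (coeffRingHom f₂)).map (coeffRingHom g₂) := by
  simp only [coeffRingHom_eq_mapRingHom, Ideal.map_map, ← mapRingHom_comp, h]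

theorem lift_rank_quotient_map_mapRingHom {F : Type u} {F' : Type v} {G : Type w}
    [Field F] [CommRing F'] [StrongRankCondition F'] [Algebra F F'] [AddCommMonoid G]
    (J : Ideal (AddMonoidAlgebra F G)) :
    Cardinal.lift.{v} (Module.rank F (AddMonoidAlgebra F G ⧸ J)) =
      Cardinal.lift.{u} (Module.rank F'
        (AddMonoidAlgebra F' G ⧸ J.map (mapRingHom G (algebraMap F F')))) := by
  let eScalar := scalarTensorEquiv F F' (M := G)
  have heScalar : (eScalar : F' ⊗[F] AddMonoidAlgebra F G →+* AddMonoidAlgebra F' G).comp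
      Algebra.TensorProduct.includeRight.toRingHom = mapRingHom G (algebraMap F F') := by
    ext <;> simp [eScalar]
  let e : F' ⊗[F] (AddMonoidAlgebra F G ⧸ J) ≃ₐ[F']
      AddMonoidAlgebra F' G ⧸ J.map (mapRingHom G (algebraMap F F')) :=
    (Algebra.TensorProduct.tensorQuotientEquiv (R := F) F' (AddMonoidAlgebra F G) F' J).trans
      (Ideal.quotientEquivAlg _ _ eScalar (by rw [← heScalar, ← Ideal.map_map]; rfl))
  have h := e.toLinearEquiv.lift_rank_eq
  rw [Module.rank_baseChange] at h
  -- `h` lives in `Cardinal.{max u v w}`, so compare the two sides there.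
  apply Cardinal.lift_injective.{w}
  simp only [Cardinal.lift_lift] at h ⊢
  exact h.trans (congrFun Cardinal.lift_umax.{max v w, max u w} _)

/-- The generic root count of a parametrized Laurent polynomial ideal is
invariant under field extension `K ⊆ L`: if `Ĩ ⊆ L[a][x^±]` is generated by the image of
`I ⊆ K[a][x^±]`, then `dim_{K(a)} K(a)[x^±]/I_{K(a)} = dim_{L(a)} L(a)[x^±]/Ĩ_{L(a)}`. -/
theorem statement8 {K : Type u} {L : Type v} [Field K] [Field L] [Algebra K L]
    {m n : ℕ} (I : Ideal (Param K (Fin m) n)) :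
    Cardinal.lift.{v} (genericRootCount I) =
      Cardinal.lift.{u} (genericRootCount
        (Ideal.map (coeffRingHom (MvPolynomial.map (algebraMap K L))) I)) := by
  let φ : MvPolynomial (Fin m) K →+* MvPolynomial (Fin m) L := MvPolynomial.map (algebraMap K L)
  have hφ : nonZeroDivisors _ ≤ (nonZeroDivisors _).comap φ :=
    nonZeroDivisors_le_comap_nonZeroDivisors_of_injective _
      (MvPolynomial.map_injective _ (algebraMap K L).injective)
  let := (IsLocalization.map (RatFF L (Fin m)) φ hφ : RatFF K (Fin m) →+* _).toAlgebra
  have hspec : genericSpec (I.map (coeffRingHom φ)) = (genericSpec I).map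
      (mapRingHom _ (algebraMap (RatFF K (Fin m)) (RatFF L (Fin m)))) := by
    rw [genericSpec, genericSpec, ← coeffRingHom_eq_mapRingHom]
    exact map_map_coeffRingHom_of_comp_eq (IsLocalization.map_comp hφ).symm I
  rw [genericRootCount, genericRootCount, hspec]
  exact lift_rank_quotient_map_mapRingHom _
end

section
/- Let K be a field equipped with an additively written valuation on its unit group, i.e., a group homomorphism val : Kˣ → (ℝ, +) such that val(a + b) ≥ min(val(a), val(b)) whenever a, b and a + b are all nonzero, together with a splitting: a group homomorphism s : (ℚ, +) → (Kˣ, ·) with val(s(q)) = q for all q ∈ ℚ. For v = (v₁,…,v_m) ∈ ℚ^m and P = (P₁,…,P_m) ∈ (Kˣ)^m write t^v·P := (s(v₁)P₁, …, s(v_m)P_m) ∈ K^m. Let X ⊆ K^m be the zero locus of an ideal J ⊆ K[a₁,…,a_m] with J ≠ 0 (so X is a proper Zariski-closed subset contained in the vanishing set of some nonzero polynomial). Then there exists a dense open subset U ⊆ ℝ^m (in the Euclidean topology) such that t^v·P ∉ X for every v ∈ ℚ^m ∩ U; in other words, t^v·P ∉ X for generic v ∈ ℚ^m. -/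
/-!
Extend `val` by `val 0 = ⊤` to an additive valuation `ν` of `K` and pick a nonzero `f ∈ J`.
At `t^v·P` the monomial term of `f` with exponent `d` has valuation `a_d + ⟨d, v⟩`, an affine
function of `v` whose linear part determines `d`. Off the finitely many hyperplanes on which two
of these affine functions agree (an open dense set) the terms have pairwise distinct valuations,
so the one of least valuation cannot be cancelled and `f(t^v·P) ≠ 0`.
-/

open MvPolynomial

section ExtendVal

variable {K : Type*} [Field K] {val : Kˣ → ℝ}

open Classical in
noncomputable def extendVal (val : Kˣ → ℝ) (x : K) : WithTop ℝ :=
  if hx : x = 0 then ⊤ else val (Units.mk0 x hx)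

lemma extendVal_zero : extendVal val 0 = ⊤ := dif_pos rfl

lemma extendVal_of_ne_zero {x : K} (hx : x ≠ 0) : extendVal val x = val (Units.mk0 x hx) :=
  dif_neg hx

lemma extendVal_units (u : Kˣ) : extendVal val u = val u := by
  rw [extendVal_of_ne_zero u.ne_zero, Units.mk0_val]

variable (hval_mul : ∀ a b : Kˣ, val (a * b) = val a + val b)
  (hval_add : ∀ a b c : Kˣ, (a : K) + (b : K) = (c : K) → min (val a) (val b) ≤ val c)

include hval_mul in
lemma extendVal_one : extendVal val 1 = 0 := by
  have h := hval_mul 1 1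
  rw [mul_one, left_eq_add] at h
  rw [← Units.val_one, extendVal_units, h, WithTop.coe_zero]

include hval_mul in
lemma extendVal_mul (x y : K) : extendVal val (x * y) = extendVal val x + extendVal val y := by
  rcases eq_or_ne x 0 with rfl | hx
  · rw [zero_mul, extendVal_zero, WithTop.top_add]
  rcases eq_or_ne y 0 with rfl | hy
  · rw [mul_zero, extendVal_zero, WithTop.add_top]
  rw [extendVal_of_ne_zero hx, extendVal_of_ne_zero hy, extendVal_of_ne_zero (mul_ne_zero hx hy),
    Units.mk0_mul x y (mul_ne_zero hx hy), hval_mul, WithTop.coe_add]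

include hval_add in
lemma min_extendVal_le_add (x y : K) :
    min (extendVal val x) (extendVal val y) ≤ extendVal val (x + y) := by
  rcases eq_or_ne x 0 with rfl | hx
  · rw [zero_add]; exact min_le_right _ _
  rcases eq_or_ne y 0 with rfl | hy
  · rw [add_zero]; exact min_le_left _ _
  rcases eq_or_ne (x + y) 0 with hxy | hxy
  · rw [hxy, extendVal_zero]; exact le_top
  rw [extendVal_of_ne_zero hx, extendVal_of_ne_zero hy, extendVal_of_ne_zero hxy,
    ← WithTop.coe_min, WithTop.coe_le_coe]
  exact hval_add _ _ _ rfl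

noncomputable def addValuationOfUnits : AddValuation K (WithTop ℝ) :=
  AddValuation.of (extendVal val) extendVal_zero (extendVal_one hval_mul)
    (min_extendVal_le_add hval_add) (extendVal_mul hval_mul)

lemma addValuationOfUnits_units (u : Kˣ) :
    addValuationOfUnits hval_mul hval_add u = val u :=
  extendVal_units u

end ExtendVal

namespace AddValuation

variable {R Γ₀ ι : Type*} [LinearOrderedAddCommMonoidWithTop Γ₀]

theorem map_prod [CommRing R] (ν : AddValuation R Γ₀) (s : Finset ι) (g : ι → R) :
    ν (∏ i ∈ s, g i) = ∑ i ∈ s, ν (g i) :=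
  _root_.map_prod (toValuation ν) g s

theorem sum_ne_zero_of_injOn [Ring R] (ν : AddValuation R Γ₀) {s : Finset ι} {g : ι → R}
    (hs : s.Nonempty) (hg : ∀ i ∈ s, ν (g i) ≠ ⊤) (hinj : Set.InjOn (fun i => ν (g i)) s) :
    ∑ i ∈ s, g i ≠ 0 := by
  classical
  obtain ⟨j, hj, hmin⟩ := s.exists_min_image (fun i => ν (g i)) hs
  have hlt : ∀ i ∈ s.erase j, ν (g j) < ν (g i) := fun i hi =>
    (hmin i (Finset.mem_of_mem_erase hi)).lt_of_ne fun h =>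
      Finset.ne_of_mem_erase hi (hinj (Finset.mem_of_mem_erase hi) hj h.symm)
  have hsum : ν (∑ i ∈ s, g i) = ν (g j) := by
    rw [← Finset.add_sum_erase s g hj]
    exact ν.map_add_eq_of_lt_left (ν.map_lt_sum (hg j hj) hlt)
  intro h0
  rw [h0, map_zero] at hsum
  exact hg j hj hsum.symm

end AddValuation

lemma LinearMap.dense_setOf_apply_ne {E : Type*} [NormedAddCommGroup E] [NormedSpace ℝ E]
    {φ : E →ₗ[ℝ] ℝ} (hφ : φ ≠ 0) (c : ℝ) : Dense {x | φ x ≠ c} :=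
  (dense_compl_singleton c).preimage
    (φ.isOpenMap_of_finiteDimensional (LinearMap.surjective_of_ne_zero hφ))

lemma exists_isOpen_dense_injOn_affine {E ι : Type*} [NormedAddCommGroup E] [NormedSpace ℝ E]
    [FiniteDimensional ℝ E] (S : Finset ι) {φ : ι → E →ₗ[ℝ] ℝ} (hφ : Set.InjOn φ S)
    (a : ι → ℝ) :
    ∃ U : Set E, IsOpen U ∧ Dense U ∧ ∀ x ∈ U, Set.InjOn (fun i => a i + φ i x) S := by
  set V : ι × ι → Set E := fun p => {x | (φ p.1 - φ p.2) x ≠ a p.2 - a p.1}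
  have hV : ∀ p ∈ (S.offDiag : Set (ι × ι)), IsOpen (V p) := fun p _ =>
    isOpen_ne_fun (LinearMap.continuous_of_finiteDimensional _) continuous_const
  refine ⟨⋂ p ∈ (S.offDiag : Set (ι × ι)), V p, isOpen_biInter_finset hV,
    dense_biInter_of_isOpen hV S.offDiag.countable_toSet fun p hp => ?_, ?_⟩
  · obtain ⟨hp₁, hp₂, hne⟩ := Finset.mem_offDiag.1 hp
    exact LinearMap.dense_setOf_apply_ne (sub_ne_zero.2 fun h => hne (hφ hp₁ hp₂ h)) _
  · intro x hx i hi j hj hij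
    by_contra hne
    refine Set.mem_iInter₂.1 hx (i, j) (Finset.mem_offDiag.2 ⟨hi, hj, hne⟩) ?_
    simp only [LinearMap.sub_apply]
    linarith

lemma injective_dotProductEquiv_natCast (σ : Type*) [Fintype σ] [DecidableEq σ] :
    Function.Injective fun d : σ →₀ ℕ => dotProductEquiv ℝ σ fun i => (d i : ℝ) :=
  (dotProductEquiv ℝ σ).injective.comp fun _ _ h =>
    Finsupp.ext fun i => Nat.cast_injective (congrFun h i)

lemma addValuationOfUnits_mul_prod_pow {K σ : Type*} [Field K] [Fintype σ] {val : Kˣ → ℝ}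
    (hval_mul : ∀ a b : Kˣ, val (a * b) = val a + val b)
    (hval_add : ∀ a b c : Kˣ, (a : K) + (b : K) = (c : K) → min (val a) (val b) ≤ val c)
    (c : K) (x : σ → Kˣ) (d : σ →₀ ℕ) :
    addValuationOfUnits hval_mul hval_add (c * ∏ i, (x i : K) ^ d i)
      = addValuationOfUnits hval_mul hval_add c + ↑(∑ i, d i • val (x i)) := by
  simp only [AddValuation.map_mul, AddValuation.map_prod, AddValuation.map_pow,
    addValuationOfUnits_units, WithTop.coe_sum, WithTop.coe_nsmul]

theorem statement10_general {K : Type*} [Field K]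
    (val : Kˣ → ℝ) (hval_mul : ∀ a b : Kˣ, val (a * b) = val a + val b)
    (hval_add : ∀ a b c : Kˣ, (a : K) + (b : K) = (c : K) → min (val a) (val b) ≤ val c)
    (s : ℚ → Kˣ)
    (hs_split : ∀ q : ℚ, val (s q) = (q : ℝ))
    {m : ℕ} (J : Ideal (MvPolynomial (Fin m) K)) (hJ : J ≠ ⊥) (P : Fin m → Kˣ) :
    ∃ U : Set (Fin m → ℝ), IsOpen U ∧ Dense U ∧
      ∀ v : Fin m → ℚ, (fun i => (v i : ℝ)) ∈ U →
        (fun i => (s (v i) : K) * (P i : K)) ∉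
          {Q : Fin m → K | ∀ f ∈ J, MvPolynomial.eval Q f = 0} := by
  obtain ⟨f, hfJ, hf0⟩ := Submodule.exists_mem_ne_zero_of_ne_bot hJ
  set ν := addValuationOfUnits hval_mul hval_add
  -- the junk value `untopD 0` only occurs off `f.support`, where `ν (coeff d f) = ⊤`
  set a : (Fin m →₀ ℕ) → ℝ := fun d => (ν (coeff d f)).untopD 0 + ∑ i, d i * val (P i)
  set φ := fun d : Fin m →₀ ℕ => dotProductEquiv ℝ (Fin m) fun i => (d i : ℝ)
  obtain ⟨U, hUo, hUd, hU⟩ := exists_isOpen_dense_injOn_affine f.support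
    (injective_dotProductEquiv_natCast (Fin m)).injOn a
  refine ⟨U, hUo, hUd, fun v hv hX => ?_⟩
  have hterm : ∀ d ∈ f.support, ν (coeff d f * ∏ i, ((s (v i) * P i : Kˣ) : K) ^ d i)
      = ↑(a d + φ d fun i => (v i : ℝ)) := by
    intro d hd
    have hc : ν (coeff d f) = ↑((ν (coeff d f)).untopD 0) :=
      (WithTop.untopD_eq_iff.1 rfl).resolve_right fun h =>
        mem_support_iff.1 hd (ν.top_iff.1 h.1)
    rw [addValuationOfUnits_mul_prod_pow, hc]
    simp only [a, φ, hval_mul, hs_split, dotProductEquiv_apply_apply, dotProduct, nsmul_eq_mul,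
      mul_add, Finset.sum_add_distrib]
    norm_cast
    ring
  have heval : eval (fun i => (s (v i) : K) * P i) f
      = ∑ d ∈ f.support, coeff d f * ∏ i, ((s (v i) * P i : Kˣ) : K) ^ d i := by
    simp only [eval_eq', Units.val_mul]
  refine ν.sum_ne_zero_of_injOn (support_nonempty.2 hf0) (fun d hd => ?_) (fun d hd e he h => ?_)
    (heval ▸ hX f hfJ)
  · rw [hterm d hd]; exact WithTop.coe_ne_top
  · exact hU _ hv hd he (WithTop.coe_injective (by simpa only [hterm d hd, hterm e he] using h))

/-- **avoidance lemma.** Let `K` be a field with an additively written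
valuation `val : Kˣ → ℝ` (a group homomorphism satisfying the ultrametric inequality on
sums that stay nonzero) together with a splitting `s : ℚ → Kˣ` of the valuation. If
`X ⊆ K^m` is the zero locus of a nonzero ideal `J ⊆ K[a₁,…,a_m]` and `P ∈ (Kˣ)^m`, then
`t^v·P := (s(v₁)P₁,…,s(v_m)P_m) ∉ X` for all rational `v` in some dense open subset of
`ℝ^m`, i.e. for generic `v ∈ ℚ^m`. -/
theorem statement10 {K : Type*} [Field K]
    (val : Kˣ → ℝ) (hval_mul : ∀ a b : Kˣ, val (a * b) = val a + val b)
    (hval_add : ∀ a b c : Kˣ, (a : K) + (b : K) = (c : K) → min (val a) (val b) ≤ val c)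
    (s : ℚ → Kˣ) (hs_mul : ∀ p q : ℚ, s (p + q) = s p * s q)
    (hs_split : ∀ q : ℚ, val (s q) = (q : ℝ))
    {m : ℕ} (J : Ideal (MvPolynomial (Fin m) K)) (hJ : J ≠ ⊥) (P : Fin m → Kˣ) :
    ∃ U : Set (Fin m → ℝ), IsOpen U ∧ Dense U ∧
      ∀ v : Fin m → ℚ, (fun i => (v i : ℝ)) ∈ U →
        (fun i => (s (v i) : K) * (P i : K)) ∉
          {Q : Fin m → K | ∀ f ∈ J, MvPolynomial.eval Q f = 0} :=
  statement10_general val hval_mul hval_add s hs_split J hJ P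
end
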